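/- arXiv:2210.03967 — 6 statements merged into one kernel-verified Lean document; each statement's English description precedes it below -/
import Mathlib

section
/- Let n and k be natural numbers with 1 ≤ k ≤ n, and let x : Fin n → ℝ. Denote by x_[1] ≥ x_[2] ≥ … ≥ x_[n] the decreasing rearrangement of the values x_1,…,x_n. Then (1/k)·∑_{i=1}^{k} x_[i] = ⨅_{s ∈ ℝ} ( s + (1/k)·∑_{i=1}^{n} max(x_i − s, 0) ), and the infimum is attained at s = x_[k] (the k-th largest value). -/
/-- Average-Top-k (ATk) reformulation: for reals `x_1, …, x_n` with decreasing
rearrangement `x_[1] ≥ … ≥ x_[n]` (given by a permutation `σ` making `x ∘ σ` antitone),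
the average of the `k` largest values equals `⨅ s, (s + (1/k) ∑ max (x i - s) 0)`,
and the infimum is attained at `s = x_[k]`. -/
theorem stmt_0 (n k : ℕ) (hk : 1 ≤ k) (hkn : k ≤ n) (x : Fin n → ℝ)
    (σ : Equiv.Perm (Fin n)) (hσ : Antitone (x ∘ σ)) :
    ((1 / (k : ℝ)) * ∑ i : Fin k, x (σ (Fin.castLE hkn i)) =
      ⨅ s : ℝ, (s + (1 / (k : ℝ)) * ∑ i : Fin n, max (x i - s) 0)) ∧
    ((1 / (k : ℝ)) * ∑ i : Fin k, x (σ (Fin.castLE hkn i)) =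
      x (σ ⟨k - 1, by omega⟩) +
        (1 / (k : ℝ)) * ∑ i : Fin n, max (x i - x (σ ⟨k - 1, by omega⟩)) 0) := by
  have hk0 : (0:ℝ) < (k:ℝ) := by exact_mod_cast hk
  set y : Fin n → ℝ := fun i => x (σ i) with hy
  have hyanti : Antitone y := hσ
  set t : ℝ := x (σ ⟨k - 1, by omega⟩) with htdef
  have hperm : ∀ s : ℝ, ∑ i : Fin n, max (x i - s) 0 = ∑ i : Fin n, max (y i - s) 0 := by
    intro s
    exact (Equiv.sum_comp σ (fun j => max (x j - s) 0)).symm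
  -- the mapped set description
  have hmapset : (Finset.univ.map (Fin.castLEEmb hkn)) =
      Finset.univ.filter (fun j : Fin n => (j : ℕ) < k) := by
    ext j
    simp only [Finset.mem_map, Finset.mem_univ, Finset.mem_filter, true_and,
      RelEmbedding.coe_toEmbedding]
    constructor
    · rintro ⟨i, -, rfl⟩
      simp
    · intro hj
      exact ⟨⟨(j:ℕ), hj⟩, by ext; simp⟩
  have hsum_map : ∀ f : Fin n → ℝ,
      ∑ i : Fin k, f (Fin.castLE hkn i) =
        ∑ j ∈ Finset.univ.filter (fun j : Fin n => (j : ℕ) < k), f j := by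
    intro f
    rw [← hmapset, Finset.sum_map]
    rfl
  -- comparison lemmas
  have hbig : ∀ i : Fin n, (i : ℕ) < k → t ≤ y i := by
    intro i hi
    have : i ≤ (⟨k - 1, by omega⟩ : Fin n) := by
      simp [Fin.le_def]; omega
    exact hyanti this
  have hsmall : ∀ i : Fin n, k ≤ (i : ℕ) → y i ≤ t := by
    intro i hi
    have : (⟨k - 1, by omega⟩ : Fin n) ≤ i := by
      simp [Fin.le_def]; omega
    exact hyanti this
  -- key equality at s = t
  have heq : ∑ i : Fin n, max (y i - t) 0 =
      ∑ i : Fin k, (y (Fin.castLE hkn i) - t) := by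
    rw [hsum_map (fun j => y j - t), Finset.sum_filter]
    apply Finset.sum_congr rfl
    intro i _
    by_cases hi : (i : ℕ) < k
    · simp only [hi, if_true]
      exact max_eq_left (by linarith [hbig i hi])
    · simp only [hi, if_false]
      exact max_eq_right (by linarith [hsmall i (by omega)])
  have hsumsub : ∑ i : Fin k, (y (Fin.castLE hkn i) - t) =
      (∑ i : Fin k, y (Fin.castLE hkn i)) - k * t := by
    rw [Finset.sum_sub_distrib]
    simp [Finset.card_univ, mul_comm]
  -- attainment
  have hattain : (1 / (k : ℝ)) * ∑ i : Fin k, y (Fin.castLE hkn i) =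
      t + (1 / (k : ℝ)) * ∑ i : Fin n, max (x i - t) 0 := by
    rw [hperm, heq, hsumsub]
    field_simp
    ring
  -- lower bound
  have hlb : ∀ s : ℝ, (1 / (k : ℝ)) * ∑ i : Fin k, y (Fin.castLE hkn i) ≤
      s + (1 / (k : ℝ)) * ∑ i : Fin n, max (x i - s) 0 := by
    intro s
    rw [hperm]
    have h1 : ∑ i : Fin k, (y (Fin.castLE hkn i) - s) ≤
        ∑ i : Fin n, max (y i - s) 0 := by
      calc ∑ i : Fin k, (y (Fin.castLE hkn i) - s)
          ≤ ∑ i : Fin k, max (y (Fin.castLE hkn i) - s) 0 := by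
            apply Finset.sum_le_sum
            intro i _
            exact le_max_left _ _
        _ = ∑ j ∈ Finset.univ.filter (fun j : Fin n => (j : ℕ) < k),
              max (y j - s) 0 := hsum_map (fun j => max (y j - s) 0)
        _ ≤ ∑ i : Fin n, max (y i - s) 0 := by
            apply Finset.sum_le_sum_of_subset_of_nonneg (Finset.filter_subset _ _)
            intro i _ _
            exact le_max_right _ _
    have h2 : ∑ i : Fin k, (y (Fin.castLE hkn i) - s) =
        (∑ i : Fin k, y (Fin.castLE hkn i)) - k * s := by
      rw [Finset.sum_sub_distrib]
      simp [Finset.card_univ, mul_comm]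
    rw [h2] at h1
    have h3 := mul_le_mul_of_nonneg_left h1 (le_of_lt (by positivity : (0:ℝ) < 1/(k:ℝ)))
    rw [mul_sub] at h3
    have h4 : (1/(k:ℝ)) * ((k:ℝ)*s) = s := by field_simp
    linarith
  refine ⟨?_, hattain⟩
  apply le_antisymm
  · exact le_ciInf hlb
  · have hbdd : BddBelow (Set.range fun s : ℝ =>
        s + (1 / (k : ℝ)) * ∑ i : Fin n, max (x i - s) 0) := by
      refine ⟨(1 / (k : ℝ)) * ∑ i : Fin k, y (Fin.castLE hkn i), ?_⟩
      rintro a ⟨s, rfl⟩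
      exact hlb s
    calc (⨅ s : ℝ, (s + (1 / (k : ℝ)) * ∑ i : Fin n, max (x i - s) 0))
        ≤ t + (1 / (k : ℝ)) * ∑ i : Fin n, max (x i - t) 0 := ciInf_le hbdd t
      _ = (1 / (k : ℝ)) * ∑ i : Fin k, y (Fin.castLE hkn i) := hattain.symm
end

section
/- Let (Ω, μ) be a probability space, X : Ω → ℝ an integrable random variable, α a real number with 0 < α ≤ 1, and η ∈ ℝ a quantile of X at level α, i.e. μ({ω : X(ω) ≥ η}) = α. Then ∫ X·1_{X ≥ η} dμ = ⨅_{s ∈ ℝ} ( α·s + ∫ max(X − s, 0) dμ ), and the infimum is attained at s = η. -/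
/-!
For any set `S` and any `s`, `X·1_S = s·1_S + (X - s)·1_S ≤ s·1_S + [X - s]_+`, so integrating gives
`∫ X·1_S ≤ μ(S)·s + ∫ [X - s]_+` for every `s`. For `S = {X ≥ η}` and `s = η` the inequality is an
equality, because `(X - η)·1_{X ≥ η} = [X - η]_+`; hence the infimum is attained at `η`.
-/

open MeasureTheory Set

section

variable {Ω : Type*} [MeasurableSpace Ω] {μ : Measure Ω} [IsFiniteMeasure μ] {X : Ω → ℝ}
  {S : Set Ω}

theorem integral_indicator_eq_measureReal_mul_add (hX : Integrable X μ)
    (hS : NullMeasurableSet S μ) (s : ℝ) :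
    ∫ ω, S.indicator X ω ∂μ = μ.real S * s + ∫ ω, S.indicator (fun ω ↦ X ω - s) ω ∂μ := by
  rw [integral_indicator₀ hS, integral_indicator₀ hS,
    integral_sub hX.integrableOn (integrable_const s), setIntegral_const, smul_eq_mul]
  ring

theorem integral_indicator_le_measureReal_mul_add_integral_max (hX : Integrable X μ)
    (hS : NullMeasurableSet S μ) (s : ℝ) :
    ∫ ω, S.indicator X ω ∂μ ≤ μ.real S * s + ∫ ω, max (X ω - s) 0 ∂μ := by
  rw [integral_indicator_eq_measureReal_mul_add hX hS s]
  have hXs : Integrable (fun ω ↦ X ω - s) μ := hX.sub (integrable_const s)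
  refine add_le_add_right (integral_mono (hXs.indicator₀ hS) hXs.pos_part fun ω ↦ ?_) _
  by_cases h : ω ∈ S <;> simp [h]

theorem integral_indicator_setOf_le_eq (hX : Integrable X μ) (η : ℝ) :
    ∫ ω, {ω | η ≤ X ω}.indicator X ω ∂μ
      = μ.real {ω | η ≤ X ω} * η + ∫ ω, max (X ω - η) 0 ∂μ := by
  rw [integral_indicator_eq_measureReal_mul_add hX
    (AEStronglyMeasurable.nullMeasurableSet_le aestronglyMeasurable_const hX.aestronglyMeasurable) η]
  congr 2 with ω
  by_cases h : η ≤ X ω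
  · simp [h]
  · simp [h, (not_le.1 h).le]

end

theorem stmt_2_general {Ω : Type*} [MeasurableSpace Ω] (μ : Measure Ω) [IsProbabilityMeasure μ]
    (X : Ω → ℝ) (hXi : Integrable X μ)
    (α : ℝ) (hα0 : 0 < α) (η : ℝ)
    (hη : μ {ω | η ≤ X ω} = ENNReal.ofReal α) :
    ((∫ ω, Set.indicator {ω | η ≤ X ω} X ω ∂μ) =
      ⨅ s : ℝ, (α * s + ∫ ω, max (X ω - s) 0 ∂μ)) ∧
    ((∫ ω, Set.indicator {ω | η ≤ X ω} X ω ∂μ) =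
      α * η + ∫ ω, max (X ω - η) 0 ∂μ) := by
  have hS : NullMeasurableSet {ω | η ≤ X ω} μ :=
    AEStronglyMeasurable.nullMeasurableSet_le aestronglyMeasurable_const hXi.aestronglyMeasurable
  have hμ : μ.real {ω | η ≤ X ω} = α := by
    rw [measureReal_def, hη, ENNReal.toReal_ofReal hα0.le]
  have hmin := integral_indicator_setOf_le_eq hXi η
  rw [hμ] at hmin
  refine ⟨(IsGLB.ciInf_eq ?_).symm, hmin⟩
  rw [hmin]
  refine IsLeast.isGLB ⟨⟨η, rfl⟩, ?_⟩
  rintro _ ⟨s, rfl⟩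
  simpa only [hμ, hmin] using integral_indicator_le_measureReal_mul_add_integral_max hXi hS s

/-- CVaR-type identity (population Average-Top-k): if `μ(X ≥ η) = α` with `0 < α ≤ 1`
and `X` is integrable, then `∫ X·1_{X ≥ η} dμ = ⨅ s, (α s + ∫ max (X - s) 0 dμ)`,
the infimum being attained at `s = η`. -/
theorem stmt_2 {Ω : Type*} [MeasurableSpace Ω] (μ : Measure Ω) [IsProbabilityMeasure μ]
    (X : Ω → ℝ) (hXm : Measurable X) (hXi : Integrable X μ)
    (α : ℝ) (hα0 : 0 < α) (hα1 : α ≤ 1) (η : ℝ)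
    (hη : μ {ω | η ≤ X ω} = ENNReal.ofReal α) :
    ((∫ ω, Set.indicator {ω | η ≤ X ω} X ω ∂μ) =
      ⨅ s : ℝ, (α * s + ∫ ω, max (X ω - s) 0 ∂μ)) ∧
    ((∫ ω, Set.indicator {ω | η ≤ X ω} X ω ∂μ) =
      α * η + ∫ ω, max (X ω - η) 0 ∂μ) :=
  stmt_2_general μ X hXi α hα0 η hη
end

section
/- Let (Ω, μ) be a probability space, X : Ω → ℝ a measurable random variable, β a real number with 0 < β ≤ 1, and η ∈ ℝ with μ({ω : X(ω) ≥ η}) = β. Let g : ℝ → ℝ be a strictly increasing function such that g∘X is integrable. Then ∫ g(X)·1_{X ≥ η} dμ = ⨅_{s ∈ ℝ} ( β·s + ∫ max(g(X) − s, 0) dμ ), and the infimum is attained at s = g(η). (In particular, for an increasing loss, the average loss over the top-β fraction of scores equals the Average-Top-k / CVaR formula applied to the composed losses.) -/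
open MeasureTheory

/-!
Write `Y = g ∘ X` and `t = g η`; since `g` is strictly increasing, `{X ≥ η} = {Y ≥ t}`.
On that set `(Y - t)⁺ = Y - t` and off it `(Y - t)⁺ = 0`, so integrating gives
`∫_{Y ≥ t} Y = β t + ∫ (Y - t)⁺`. For any other `s`, the pointwise bound
`(Y - t)⁺ + 1_{Y ≥ t} (t - s) ≤ (Y - s)⁺` integrates to
`β t + ∫ (Y - t)⁺ ≤ β s + ∫ (Y - s)⁺`, so `s = t` attains the infimum.
-/

section UpperTail

variable {Ω : Type*}

lemma max_sub_zero_eq_indicator_le (Y : Ω → ℝ) (t : ℝ) :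
    (fun ω => max (Y ω - t) 0) = {ω | t ≤ Y ω}.indicator (fun ω => Y ω - t) := by
  funext ω
  by_cases h : t ≤ Y ω
  · simp [h]
  · simp [h, (not_le.mp h).le]

lemma max_sub_zero_add_indicator_le (Y : Ω → ℝ) (t s : ℝ) (ω : Ω) :
    max (Y ω - t) 0 + {ω | t ≤ Y ω}.indicator (fun _ => t - s) ω ≤ max (Y ω - s) 0 := by
  by_cases h : t ≤ Y ω
  · simp only [Set.indicator_of_mem (show ω ∈ {ω | t ≤ Y ω} from h),
      max_eq_left (sub_nonneg.mpr h)]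
    linarith [le_max_left (Y ω - s) 0]
  · simp [h, (not_le.mp h).le]

variable [MeasurableSpace Ω] {μ : Measure Ω} [IsFiniteMeasure μ] {Y : Ω → ℝ}

lemma integral_indicator_le_eq (hY : Integrable Y μ) (t : ℝ) :
    ∫ ω, {ω | t ≤ Y ω}.indicator Y ω ∂μ
      = μ.real {ω | t ≤ Y ω} * t + ∫ ω, max (Y ω - t) 0 ∂μ := by
  have hA : NullMeasurableSet {ω | t ≤ Y ω} μ :=
    aestronglyMeasurable_const.nullMeasurableSet_le hY.1
  rw [max_sub_zero_eq_indicator_le, integral_indicator₀ hA, integral_indicator₀ hA,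
    integral_sub hY.integrableOn (integrableOn_const (measure_lt_top μ _).ne),
    setIntegral_const, smul_eq_mul]
  ring

lemma integral_max_sub_zero_add_le (hY : Integrable Y μ) (t s : ℝ) :
    μ.real {ω | t ≤ Y ω} * t + ∫ ω, max (Y ω - t) 0 ∂μ
      ≤ μ.real {ω | t ≤ Y ω} * s + ∫ ω, max (Y ω - s) 0 ∂μ := by
  have hA : NullMeasurableSet {ω | t ≤ Y ω} μ :=
    aestronglyMeasurable_const.nullMeasurableSet_le hY.1
  have hmax (r : ℝ) : Integrable (fun ω => max (Y ω - r) 0) μ := by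
    simpa using (hY.sub (integrable_const r)).pos_part
  have hind : Integrable ({ω | t ≤ Y ω}.indicator fun _ => t - s) μ :=
    (integrable_const _).indicator₀ hA
  have h : ∫ ω, (max (Y ω - t) 0 + {ω | t ≤ Y ω}.indicator (fun _ => t - s) ω) ∂μ
      ≤ ∫ ω, max (Y ω - s) 0 ∂μ :=
    integral_mono ((hmax t).add hind) (hmax s) (max_sub_zero_add_indicator_le Y t s)
  rw [integral_add (hmax t) hind, integral_indicator₀ hA, setIntegral_const, smul_eq_mul] at h
  linarith

theorem integral_indicator_le_eq_iInf (hY : Integrable Y μ) (t : ℝ) :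
    ∫ ω, {ω | t ≤ Y ω}.indicator Y ω ∂μ
      = ⨅ s : ℝ, (μ.real {ω | t ≤ Y ω} * s + ∫ ω, max (Y ω - s) 0 ∂μ) := by
  have hleast : IsLeast
      (Set.range fun s : ℝ => μ.real {ω | t ≤ Y ω} * s + ∫ ω, max (Y ω - s) 0 ∂μ)
      (∫ ω, {ω | t ≤ Y ω}.indicator Y ω ∂μ) := by
    refine ⟨⟨t, (integral_indicator_le_eq hY t).symm⟩, ?_⟩
    rintro _ ⟨s, rfl⟩
    exact (integral_indicator_le_eq hY t).trans_le (integral_max_sub_zero_add_le hY t s)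
  exact hleast.csInf_eq.symm

end UpperTail

theorem stmt_3_general {Ω : Type*} [MeasurableSpace Ω] (μ : Measure Ω) [IsProbabilityMeasure μ]
    (X : Ω → ℝ)
    (β : ℝ) (hβ0 : 0 < β) (η : ℝ)
    (hη : μ {ω | η ≤ X ω} = ENNReal.ofReal β)
    (g : ℝ → ℝ) (hg : StrictMono g)
    (hgi : Integrable (fun ω => g (X ω)) μ) :
    ((∫ ω, Set.indicator {ω | η ≤ X ω} (fun ω' => g (X ω')) ω ∂μ) =
      ⨅ s : ℝ, (β * s + ∫ ω, max (g (X ω) - s) 0 ∂μ)) ∧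
    ((∫ ω, Set.indicator {ω | η ≤ X ω} (fun ω' => g (X ω')) ω ∂μ) =
      β * g η + ∫ ω, max (g (X ω) - g η) 0 ∂μ) := by
  have hset : {ω | η ≤ X ω} = {ω | g η ≤ g (X ω)} := by
    ext ω
    exact hg.le_iff_le.symm
  have hμ : μ.real {ω | g η ≤ g (X ω)} = β := by
    rw [measureReal_def, ← hset, hη, ENNReal.toReal_ofReal hβ0.le]
  rw [hset]
  have h_inf := integral_indicator_le_eq_iInf hgi (g η)
  have h_val := integral_indicator_le_eq hgi (g η)
  rw [hμ] at h_inf h_val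
  exact ⟨h_inf, h_val⟩

/-- CVaR identity for an increasing loss: if `μ(X ≥ η) = β` with `0 < β ≤ 1` and
`g` is strictly increasing with `g ∘ X` integrable, then
`∫ g(X)·1_{X ≥ η} dμ = ⨅ s, (β s + ∫ max (g(X) - s) 0 dμ)`, attained at `s = g η`. -/
theorem stmt_3 {Ω : Type*} [MeasurableSpace Ω] (μ : Measure Ω) [IsProbabilityMeasure μ]
    (X : Ω → ℝ) (hXm : Measurable X)
    (β : ℝ) (hβ0 : 0 < β) (hβ1 : β ≤ 1) (η : ℝ)
    (hη : μ {ω | η ≤ X ω} = ENNReal.ofReal β)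
    (g : ℝ → ℝ) (hg : StrictMono g)
    (hgi : Integrable (fun ω => g (X ω)) μ) :
    ((∫ ω, Set.indicator {ω | η ≤ X ω} (fun ω' => g (X ω')) ω ∂μ) =
      ⨅ s : ℝ, (β * s + ∫ ω, max (g (X ω) - s) 0 ∂μ)) ∧
    ((∫ ω, Set.indicator {ω | η ≤ X ω} (fun ω' => g (X ω')) ω ∂μ) =
      β * g η + ∫ ω, max (g (X ω) - g η) 0 ∂μ) :=
  stmt_3_general μ X β hβ0 η hη g hg hgi
end

section
/- Let μ_P and μ_N be probability measures on ℝ each supported in [0,1]. Then ∫∫ (1 − (x − y))² d(μ_P ⊗ μ_N)(x, y) = min_{(a,b) ∈ [0,1]²} max_{γ ∈ [−1,1]} [ 1 + ∫ (x − a)² dμ_P − 2(1+γ)∫ x dμ_P + ∫ (y − b)² dμ_N + 2(1+γ)∫ y dμ_N − γ² ], i.e. the pairwise partial-AUC surrogate objective for a fixed scoring function equals, up to the additive constant 1, the min-max value of the instance-wise objective; the optimum is attained at a* = ∫ x dμ_P, b* = ∫ y dμ_N, γ* = b* − a*. -/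
open MeasureTheory ProbabilityTheory

/-!
Write `m_P, m_N` for the means and `V_P, V_N` for the variances. Since `∫ (x - a)² = V + (a - m)²`,
the instance-wise objective equals
`V_P + V_N + (1 + m_N - m_P)² + (a - m_P)² + (b - m_N)² - (γ - (m_N - m_P))²`,
a saddle whose min-max value is `V_P + V_N + (1 + m_N - m_P)²`, attained at `(m_P, m_N, m_N - m_P)`.
Under the product measure `x - y` has mean `m_P - m_N` and variance `V_P + V_N`, so the pairwise
objective `∫∫ (1 - (x - y))²` has the same value.
-/

section Moments

variable {Ω Ω' : Type*} {mΩ : MeasurableSpace Ω} {mΩ' : MeasurableSpace Ω'}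
  {μ : Measure Ω} {ν : Measure Ω'} [IsProbabilityMeasure μ] [IsProbabilityMeasure ν]
  {X : Ω → ℝ} {Y : Ω' → ℝ}

lemma integral_sub_const_sq (hX : MemLp X 2 μ) (a : ℝ) :
    ∫ ω, (X ω - a) ^ 2 ∂μ = Var[X; μ] + (μ[X] - a) ^ 2 := by
  have hXa : MemLp (fun ω => X ω - a) 2 μ := hX.sub (memLp_const a)
  have h := variance_eq_sub hXa
  rw [variance_sub_const hX.aestronglyMeasurable,
    integral_sub (hX.integrable one_le_two) (integrable_const a), integral_const] at h
  simp only [Pi.pow_apply, probReal_univ, one_smul] at h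
  linarith

lemma integral_prod_const_sub_sub_sq (hX : MemLp X 2 μ) (hY : MemLp Y 2 ν) (c : ℝ) :
    ∫ z, (c - (X z.1 - Y z.2)) ^ 2 ∂(μ.prod ν) =
      Var[X; μ] + Var[Y; ν] + (c - (μ[X] - ν[Y])) ^ 2 := by
  have hint : Integrable (fun z => (c - (X z.1 - Y z.2)) ^ 2) (μ.prod ν) :=
    ((memLp_const c).sub ((hX.comp_fst ν).sub (hY.comp_snd μ))).integrable_sq
  have hinner : ∀ x, ∫ y, (c - (X x - Y y)) ^ 2 ∂ν = Var[Y; ν] + (X x - (c + ν[Y])) ^ 2 := by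
    intro x
    simp_rw [show ∀ y, (c - (X x - Y y)) ^ 2 = (Y y - (X x - c)) ^ 2 from fun y => by ring]
    rw [integral_sub_const_sq hY]
    ring
  rw [integral_prod _ hint]
  simp_rw [hinner]
  have hXc : MemLp (fun x => X x - (c + ν[Y])) 2 μ := hX.sub (memLp_const _)
  rw [integral_add (integrable_const _) hXc.integrable_sq, integral_const,
    integral_sub_const_sq hX]
  simp only [probReal_univ, one_smul]
  ring

end Moments

lemma iSup_sub_sq_sub_eq_of_mem {s : Set ℝ} {r : ℝ} (hr : r ∈ s) (c : ℝ) :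
    ⨆ γ : s, (c - ((γ : ℝ) - r) ^ 2) = c := by
  refine (IsMaxOn.iSup_eq (f := fun γ => c - (γ - r) ^ 2) hr fun γ _ => ?_).trans (by ring)
  simpa using sq_nonneg (γ - r)

lemma iInf_add_sq_sub_eq_of_mem {s : Set ℝ} {p : ℝ} (hp : p ∈ s) (c : ℝ) :
    ⨅ a : s, (c + ((a : ℝ) - p) ^ 2) = c := by
  refine (IsMinOn.iInf_eq (f := fun a => c + (a - p) ^ 2) hp fun a _ => ?_).trans (by ring)
  simpa using sq_nonneg (a - p)

section SupportedInIcc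

variable {μ : Measure ℝ} [IsProbabilityMeasure μ] {a b : ℝ}

lemma memLp_id_of_measure_Icc_eq_one (h : μ (Set.Icc a b) = 1) (p : ENNReal) :
    MemLp (fun x => x) p μ :=
  memLp_of_bounded ((mem_ae_iff_prob_eq_one measurableSet_Icc).2 h)
    aestronglyMeasurable_id p

lemma integral_id_mem_Icc_of_measure_Icc_eq_one (h : μ (Set.Icc a b) = 1) :
    ∫ x, x ∂μ ∈ Set.Icc a b :=
  (convex_Icc a b).integral_mem isClosed_Icc ((mem_ae_iff_prob_eq_one measurableSet_Icc).2 h)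
    ((memLp_id_of_measure_Icc_eq_one h 1).integrable le_rfl)

end SupportedInIcc

/-- Instance-wise min-max reformulation of the pairwise squared surrogate loss:
`∫∫ (1 − (x − y))² d(μP ⊗ μN)` equals the min over `(a,b) ∈ [0,1]²` of the max over
`γ ∈ [−1,1]` of the instance-wise objective, the optimum being attained at
`a* = ∫ x dμP`, `b* = ∫ y dμN`, `γ* = b* − a*`. -/
theorem stmt_12 (μP μN : Measure ℝ) [IsProbabilityMeasure μP] [IsProbabilityMeasure μN]
    (hP : μP (Set.Icc 0 1) = 1) (hN : μN (Set.Icc 0 1) = 1) :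
    ((∫ z : ℝ × ℝ, (1 - (z.1 - z.2)) ^ 2 ∂(μP.prod μN)) =
      ⨅ a : Set.Icc (0 : ℝ) 1, ⨅ b : Set.Icc (0 : ℝ) 1, ⨆ γ : Set.Icc (-1 : ℝ) 1,
        (1 + (∫ x, (x - (a : ℝ)) ^ 2 ∂μP) - 2 * (1 + (γ : ℝ)) * (∫ x, x ∂μP)
          + (∫ y, (y - (b : ℝ)) ^ 2 ∂μN) + 2 * (1 + (γ : ℝ)) * (∫ y, y ∂μN)
          - (γ : ℝ) ^ 2)) ∧
    ((∫ x, x ∂μP) ∈ Set.Icc (0 : ℝ) 1) ∧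
    ((∫ y, y ∂μN) ∈ Set.Icc (0 : ℝ) 1) ∧
    (((∫ y, y ∂μN) - (∫ x, x ∂μP)) ∈ Set.Icc (-1 : ℝ) 1) ∧
    ((∫ z : ℝ × ℝ, (1 - (z.1 - z.2)) ^ 2 ∂(μP.prod μN)) =
      1 + (∫ x, (x - (∫ x', x' ∂μP)) ^ 2 ∂μP)
        - 2 * (1 + ((∫ y, y ∂μN) - (∫ x, x ∂μP))) * (∫ x, x ∂μP)
        + (∫ y, (y - (∫ y', y' ∂μN)) ^ 2 ∂μN)
        + 2 * (1 + ((∫ y, y ∂μN) - (∫ x, x ∂μP))) * (∫ y, y ∂μN)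
        - ((∫ y, y ∂μN) - (∫ x, x ∂μP)) ^ 2) := by
  have hP2 := memLp_id_of_measure_Icc_eq_one hP 2
  have hN2 := memLp_id_of_measure_Icc_eq_one hN 2
  have hmP := integral_id_mem_Icc_of_measure_Icc_eq_one hP
  have hmN := integral_id_mem_Icc_of_measure_Icc_eq_one hN
  have hd : (∫ y, y ∂μN) - (∫ x, x ∂μP) ∈ Set.Icc (-1 : ℝ) 1 :=
    ⟨by linarith [hmP.2, hmN.1], by linarith [hmP.1, hmN.2]⟩
  have hpair := integral_prod_const_sub_sub_sq hP2 hN2 1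
  have hsaddle : ∀ a b γ : ℝ,
      1 + (∫ x, (x - a) ^ 2 ∂μP) - 2 * (1 + γ) * (∫ x, x ∂μP)
        + (∫ y, (y - b) ^ 2 ∂μN) + 2 * (1 + γ) * (∫ y, y ∂μN) - γ ^ 2 =
      (Var[fun x => x; μP] + Var[fun y => y; μN] + (1 - ((∫ x, x ∂μP) - (∫ y, y ∂μN))) ^ 2)
        + (a - ∫ x, x ∂μP) ^ 2 + (b - ∫ y, y ∂μN) ^ 2
        - (γ - ((∫ y, y ∂μN) - (∫ x, x ∂μP))) ^ 2 := by
    intro a b γ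
    rw [integral_sub_const_sq hP2, integral_sub_const_sq hN2]
    ring
  refine ⟨?_, hmP, hmN, hd, ?_⟩
  · simp only [hsaddle, iSup_sub_sq_sub_eq_of_mem hd, iInf_add_sq_sub_eq_of_mem hmN,
      iInf_add_sq_sub_eq_of_mem hmP, hpair]
  · rw [hpair, integral_sub_const_sq hP2, integral_sub_const_sq hN2]
    ring
end

section
/- Let μ_P and μ_N be probability measures on ℝ each supported in [0,1]; write E_+ = ∫ x dμ_P, E_− = ∫ y dμ_N, ΔE = E_− − E_+, Var_P = ∫ x² dμ_P − E_+², Var_N = ∫ y² dμ_N − E_−². Define H(a,b,γ) = ∫ (x−a)² dμ_P + ∫ (y−b)² dμ_N + 2ΔE + 2γ·ΔE − γ². Then min_{(a,b) ∈ [0,1]²} max_{γ ∈ [b−1, 1]} H(a,b,γ) = min_{(a,b) ∈ [0,1]²} max_{γ ∈ [−1, 1]} H(a,b,γ) = Var_P + Var_N + (ΔE)² + 2·ΔE; i.e., restricting the dual variable γ to the coupled interval [b−1, 1] does not change the min-max value of the OPAUC objective. -/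
/-!
With `d = E₋ - E₊` and `V = Var_P + Var_N + d² + 2d`, the objective completes to
`H(a, b, γ) = V + (a - E₊)² + (b - E₋)² - (γ - d)²`.
Over `γ ∈ [-1, 1]` the supremum is attained at `γ = d`, so the min-max value is `V`,
attained at `(a, b) = (E₊, E₋)`. On the coupled interval `[b - 1, 1]` the point `d` may be
missing, but `γ = max (b - 1) d` still gives `(γ - d)² ≤ (b - E₋)²` because `E₊ ≤ 1`, so every
inner supremum is still at least `V`; and at `(E₊, E₋)` every `γ` gives at most `V`.
-/

open MeasureTheory Set

theorem iInf_iInf_iSup_eq_of_forall_exists_le {L α β : Type*} [ConditionallyCompleteLattice L]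
    {ι : β → Type*} {F : α → (b : β) → ι b → L} {v : L}
    (hbdd : ∀ a b, BddAbove (range (F a b))) (hlow : ∀ a b, ∃ g, v ≤ F a b g)
    (a₀ : α) (b₀ : β) (hup : ∀ g, F a₀ b₀ g ≤ v) :
    ⨅ a, ⨅ b, ⨆ g, F a b g = v := by
  have : Nonempty α := ⟨a₀⟩
  have : Nonempty β := ⟨b₀⟩
  have hsup : ∀ a b, v ≤ ⨆ g, F a b g := fun a b ↦
    let ⟨g, hg⟩ := hlow a b
    hg.trans (le_ciSup (hbdd a b) g)
  have hinf : ∀ a, v ≤ ⨅ b, ⨆ g, F a b g := fun a ↦ le_ciInf (hsup a)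
  refine le_antisymm ?_ (le_ciInf hinf)
  have : Nonempty (ι b₀) := ⟨(hlow a₀ b₀).choose⟩
  calc ⨅ a, ⨅ b, ⨆ g, F a b g ≤ ⨅ b, ⨆ g, F a₀ b g :=
        ciInf_le ⟨v, by rintro _ ⟨a, rfl⟩; exact hinf a⟩ a₀
    _ ≤ ⨆ g, F a₀ b₀ g := ciInf_le ⟨v, by rintro _ ⟨b, rfl⟩; exact hsup a₀ b⟩ b₀
    _ ≤ v := ciSup_le hup

theorem integral_sub_sq_eq {μ : Measure ℝ} [IsProbabilityMeasure μ]
    (h₁ : Integrable (fun x ↦ x) μ) (h₂ : Integrable (fun x ↦ x ^ 2) μ) (a : ℝ) :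
    ∫ x, (x - a) ^ 2 ∂μ = (∫ x, x ^ 2 ∂μ) - (∫ x, x ∂μ) ^ 2 + (a - ∫ x, x ∂μ) ^ 2 := by
  have hexpand : (fun x : ℝ ↦ (x - a) ^ 2) = fun x ↦ x ^ 2 - 2 * a * x + a ^ 2 := by
    funext x; ring
  have hquad : Integrable (fun x : ℝ ↦ x ^ 2 - 2 * a * x) μ := h₂.sub (h₁.const_mul _)
  rw [hexpand, integral_add hquad (integrable_const _), integral_sub h₂ (h₁.const_mul _),
    integral_const_mul, integral_const]
  simp only [probReal_univ, smul_eq_mul, one_mul]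
  ring

section UnitIntervalSupport

variable {μ : Measure ℝ} [IsProbabilityMeasure μ] (hμ : ∀ᵐ x ∂μ, x ∈ Icc (0 : ℝ) 1)
include hμ

theorem integral_id_mem_Icc_of_ae_mem_Icc : ∫ x, x ∂μ ∈ Icc (0 : ℝ) 1 := by
  refine ⟨integral_nonneg_of_ae (hμ.mono fun x hx ↦ hx.1), ?_⟩
  calc ∫ x, x ∂μ ≤ ∫ _, (1 : ℝ) ∂μ :=
        integral_mono_ae (.of_mem_Icc 0 1 aemeasurable_id hμ) (integrable_const 1)
          (hμ.mono fun x hx ↦ hx.2)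
    _ = 1 := by simp

theorem integral_sub_sq_eq_of_ae_mem_Icc (a : ℝ) :
    ∫ x, (x - a) ^ 2 ∂μ = (∫ x, x ^ 2 ∂μ) - (∫ x, x ∂μ) ^ 2 + (a - ∫ x, x ∂μ) ^ 2 :=
  integral_sub_sq_eq (.of_mem_Icc 0 1 aemeasurable_id hμ)
    (.of_mem_Icc 0 1 (aemeasurable_id.pow_const 2)
      (hμ.mono fun _ hx ↦ ⟨sq_nonneg _, pow_le_one₀ hx.1 hx.2⟩)) a

end UnitIntervalSupport

theorem sq_max_sub_sub_le {b p q : ℝ} (hp : p ≤ 1) :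
    (max (b - 1) (q - p) - (q - p)) ^ 2 ≤ (b - q) ^ 2 := by
  rcases le_total (b - 1) (q - p) with h | h
  · rw [max_eq_right h, sub_self, zero_pow two_ne_zero]; positivity
  · rw [max_eq_left h]
    exact pow_le_pow_left₀ (by linarith) (by linarith) 2

section CompletedSquare

variable {H : ℝ → ℝ → ℝ → ℝ} {V p q : ℝ}
  (hH : ∀ a b γ, H a b γ = V + (a - p) ^ 2 + (b - q) ^ 2 - (γ - (q - p)) ^ 2)
include hH

theorem le_of_eq_completed_sq (a b γ : ℝ) : H a b γ ≤ V + (a - p) ^ 2 + (b - q) ^ 2 := by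
  rw [hH]; linarith [sq_nonneg (γ - (q - p))]

theorem bddAbove_range_of_eq_completed_sq (s : Set ℝ) (a b : ℝ) :
    BddAbove (range fun γ : s ↦ H a b γ) :=
  ⟨_, by rintro _ ⟨γ, rfl⟩; exact le_of_eq_completed_sq hH a b γ⟩

variable (hp : p ∈ Icc (0 : ℝ) 1) (hq : q ∈ Icc (0 : ℝ) 1)
include hp hq

theorem iInf_iInf_iSup_Icc_neg_one_eq_of_eq_completed_sq :
    ⨅ a : Icc (0 : ℝ) 1, ⨅ b : Icc (0 : ℝ) 1, ⨆ γ : Icc (-1 : ℝ) 1, H a b γ = V := by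
  refine iInf_iInf_iSup_eq_of_forall_exists_le
    (fun a b ↦ bddAbove_range_of_eq_completed_sq hH _ a b) (fun a b ↦ ?_) ⟨p, hp⟩ ⟨q, hq⟩
    fun γ ↦ by simpa using le_of_eq_completed_sq hH p q γ
  refine ⟨⟨q - p, by linarith [hp.2, hq.1], by linarith [hp.1, hq.2]⟩, ?_⟩
  rw [hH]
  nlinarith [sq_nonneg ((a : ℝ) - p), sq_nonneg ((b : ℝ) - q)]

theorem iInf_iInf_iSup_Icc_sub_one_eq_of_eq_completed_sq :
    ⨅ a : Icc (0 : ℝ) 1, ⨅ b : Icc (0 : ℝ) 1, ⨆ γ : Icc ((b : ℝ) - 1) 1, H a b γ = V := by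
  refine iInf_iInf_iSup_eq_of_forall_exists_le
    (fun a b ↦ bddAbove_range_of_eq_completed_sq hH _ a b) (fun a b ↦ ?_) ⟨p, hp⟩ ⟨q, hq⟩
    fun γ ↦ by simpa using le_of_eq_completed_sq hH p q γ
  refine ⟨⟨max ((b : ℝ) - 1) (q - p), le_max_left _ _,
    max_le (by linarith [b.2.2]) (by linarith [hp.1, hq.2])⟩, ?_⟩
  rw [hH]
  linarith [sq_max_sub_sub_le (b := (b : ℝ)) (q := q) hp.2, sq_nonneg ((a : ℝ) - p)]

end CompletedSquare

/-- Constrained reformulation for OPAUC: restricting the dual variable `γ` to the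
coupled interval `[b−1, 1]` does not change the min-max value of the objective
`H(a,b,γ) = ∫(x−a)² dμP + ∫(y−b)² dμN + 2ΔE + 2γΔE − γ²`, and this common value is
`Var_P + Var_N + (ΔE)² + 2ΔE`. -/
theorem stmt_13 (μP μN : Measure ℝ) [IsProbabilityMeasure μP] [IsProbabilityMeasure μN]
    (hP : μP (Set.Icc 0 1) = 1) (hN : μN (Set.Icc 0 1) = 1)
    (H : ℝ → ℝ → ℝ → ℝ)
    (hH : ∀ a b γ, H a b γ =
      (∫ x, (x - a) ^ 2 ∂μP) + (∫ y, (y - b) ^ 2 ∂μN)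
        + 2 * ((∫ y, y ∂μN) - (∫ x, x ∂μP))
        + 2 * γ * ((∫ y, y ∂μN) - (∫ x, x ∂μP)) - γ ^ 2) :
    ((⨅ a : Set.Icc (0 : ℝ) 1, ⨅ b : Set.Icc (0 : ℝ) 1,
        ⨆ γ : Set.Icc ((b : ℝ) - 1) 1, H a b γ) =
      ⨅ a : Set.Icc (0 : ℝ) 1, ⨅ b : Set.Icc (0 : ℝ) 1,
        ⨆ γ : Set.Icc (-1 : ℝ) 1, H a b γ) ∧
    ((⨅ a : Set.Icc (0 : ℝ) 1, ⨅ b : Set.Icc (0 : ℝ) 1,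
        ⨆ γ : Set.Icc (-1 : ℝ) 1, H a b γ) =
      ((∫ x, x ^ 2 ∂μP) - (∫ x, x ∂μP) ^ 2) + ((∫ y, y ^ 2 ∂μN) - (∫ y, y ∂μN) ^ 2)
        + ((∫ y, y ∂μN) - (∫ x, x ∂μP)) ^ 2
        + 2 * ((∫ y, y ∂μN) - (∫ x, x ∂μP))) := by
  have hμP : ∀ᵐ x ∂μP, x ∈ Icc (0 : ℝ) 1 := (mem_ae_iff_prob_eq_one measurableSet_Icc).2 hP
  have hμN : ∀ᵐ y ∂μN, y ∈ Icc (0 : ℝ) 1 := (mem_ae_iff_prob_eq_one measurableSet_Icc).2 hN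
  have hH' : ∀ a b γ, H a b γ =
      ((∫ x, x ^ 2 ∂μP) - (∫ x, x ∂μP) ^ 2) + ((∫ y, y ^ 2 ∂μN) - (∫ y, y ∂μN) ^ 2)
        + ((∫ y, y ∂μN) - (∫ x, x ∂μP)) ^ 2 + 2 * ((∫ y, y ∂μN) - (∫ x, x ∂μP))
        + (a - ∫ x, x ∂μP) ^ 2 + (b - ∫ y, y ∂μN) ^ 2
        - (γ - ((∫ y, y ∂μN) - (∫ x, x ∂μP))) ^ 2 := by
    intro a b γ
    rw [hH, integral_sub_sq_eq_of_ae_mem_Icc hμP, integral_sub_sq_eq_of_ae_mem_Icc hμN]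
    ring
  have hfull := iInf_iInf_iSup_Icc_neg_one_eq_of_eq_completed_sq hH'
    (integral_id_mem_Icc_of_ae_mem_Icc hμP) (integral_id_mem_Icc_of_ae_mem_Icc hμN)
  have hcoupled := iInf_iInf_iSup_Icc_sub_one_eq_of_eq_completed_sq hH'
    (integral_id_mem_Icc_of_ae_mem_Icc hμP) (integral_id_mem_Icc_of_ae_mem_Icc hμN)
  exact ⟨hcoupled.trans hfull.symm, hfull⟩
end

section
/- Let μ_P and μ_N be probability measures on ℝ each supported in [0,1]; write E_+ = ∫ x dμ_P, E_− = ∫ y dμ_N, ΔE = E_− − E_+, Var_P = ∫ x² dμ_P − E_+², Var_N = ∫ y² dμ_N − E_−². Define H(a,b,γ) = ∫ (x−a)² dμ_P + ∫ (y−b)² dμ_N + 2ΔE + 2γ·ΔE − γ². Then min_{(a,b) ∈ [0,1]²} max_{γ ∈ [max(−a, b−1), 1]} H(a,b,γ) = min_{(a,b) ∈ [0,1]²} max_{γ ∈ [−1, 1]} H(a,b,γ) = Var_P + Var_N + (ΔE)² + 2·ΔE; i.e., restricting the dual variable γ to the coupled interval [max(−a, b−1), 1] does not change the min-max value of the TPAUC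 objective. -/
open MeasureTheory

private lemma ae_mem_Icc (μ : Measure ℝ) [IsProbabilityMeasure μ]
    (h : μ (Set.Icc 0 1) = 1) : ∀ᵐ x ∂μ, x ∈ Set.Icc (0:ℝ) 1 := by
  rw [ae_iff]
  have h2 : μ (Set.Icc (0:ℝ) 1)ᶜ = 0 := by
    rw [measure_compl measurableSet_Icc (measure_ne_top _ _), h, measure_univ, tsub_self]
  exact h2

private lemma int_id (μ : Measure ℝ) [IsProbabilityMeasure μ]
    (h : μ (Set.Icc 0 1) = 1) : Integrable (fun x : ℝ => x) μ := by
  refine Integrable.mono' (integrable_const 1) measurable_id.aestronglyMeasurable ?_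
  filter_upwards [ae_mem_Icc μ h] with x hx
  rw [Real.norm_eq_abs, abs_le]
  exact ⟨by linarith [hx.1], hx.2⟩

private lemma int_sq (μ : Measure ℝ) [IsProbabilityMeasure μ]
    (h : μ (Set.Icc 0 1) = 1) : Integrable (fun x : ℝ => x ^ 2) μ := by
  refine Integrable.mono' (integrable_const 1) (by fun_prop) ?_
  filter_upwards [ae_mem_Icc μ h] with x hx
  rw [Real.norm_eq_abs, abs_le]
  constructor <;> nlinarith [hx.1, hx.2]

private lemma mean_mem (μ : Measure ℝ) [IsProbabilityMeasure μ]
    (h : μ (Set.Icc 0 1) = 1) : (∫ x, x ∂μ) ∈ Set.Icc (0:ℝ) 1 := by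
  constructor
  · exact integral_nonneg_of_ae ((ae_mem_Icc μ h).mono fun x hx => hx.1)
  · calc (∫ x, x ∂μ) ≤ ∫ _, (1:ℝ) ∂μ :=
        integral_mono_ae (int_id μ h) (integrable_const 1)
          ((ae_mem_Icc μ h).mono fun x hx => hx.2)
    _ = 1 := by simp

private lemma expand_sq (μ : Measure ℝ) [IsProbabilityMeasure μ]
    (h : μ (Set.Icc 0 1) = 1) (a : ℝ) :
    ∫ x, (x - a) ^ 2 ∂μ = (∫ x, x ^ 2 ∂μ) - 2 * a * (∫ x, x ∂μ) + a ^ 2 := by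
  have hc : Integrable (fun x : ℝ => 2 * a * x) μ := by
    simpa using (int_id μ h).const_mul (2 * a)
  have h1 : Integrable (fun x : ℝ => x ^ 2 - 2 * a * x) μ := (int_sq μ h).sub hc
  have key : (fun x : ℝ => (x - a) ^ 2) = fun x => (x ^ 2 - 2 * a * x) + a ^ 2 := by
    funext x; ring
  rw [key, integral_add h1 (integrable_const _), integral_sub (int_sq μ h) hc,
    integral_const_mul, integral_const]
  simp

private lemma sup_quad (K Δ : ℝ) (s : Set ℝ) (hΔ : Δ ∈ s) :
    (⨆ γ : s, (K + 2 * (γ : ℝ) * Δ - (γ : ℝ) ^ 2)) = K + Δ ^ 2 := by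
  haveI : Nonempty s := ⟨⟨Δ, hΔ⟩⟩
  apply le_antisymm
  · exact ciSup_le fun γ =>
      show K + 2 * (γ : ℝ) * Δ - (γ : ℝ) ^ 2 ≤ K + Δ ^ 2 by
        nlinarith [sq_nonneg ((γ : ℝ) - Δ)]
  · have hb : BddAbove (Set.range fun γ : s => K + 2 * (γ : ℝ) * Δ - (γ : ℝ) ^ 2) := by
      refine ⟨K + Δ ^ 2, ?_⟩
      rintro x ⟨γ, rfl⟩
      show K + 2 * (γ : ℝ) * Δ - (γ : ℝ) ^ 2 ≤ K + Δ ^ 2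
      nlinarith [sq_nonneg ((γ : ℝ) - Δ)]
    calc K + Δ ^ 2 = K + 2 * ((⟨Δ, hΔ⟩ : s) : ℝ) * Δ - ((⟨Δ, hΔ⟩ : s) : ℝ) ^ 2 := by ring
    _ ≤ _ := le_ciSup hb (⟨Δ, hΔ⟩ : s)

private lemma sup_quad_ge (K Δ V : ℝ) (s : Set ℝ) (γ₀ : ℝ) (h₀ : γ₀ ∈ s)
    (hV : V ≤ K + 2 * γ₀ * Δ - γ₀ ^ 2) :
    V ≤ ⨆ γ : s, (K + 2 * (γ : ℝ) * Δ - (γ : ℝ) ^ 2) := by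
  have hb : BddAbove (Set.range fun γ : s => K + 2 * (γ : ℝ) * Δ - (γ : ℝ) ^ 2) := by
    refine ⟨K + Δ ^ 2, ?_⟩
    rintro x ⟨γ, rfl⟩
    show K + 2 * (γ : ℝ) * Δ - (γ : ℝ) ^ 2 ≤ K + Δ ^ 2
    nlinarith [sq_nonneg ((γ : ℝ) - Δ)]
  exact hV.trans (le_ciSup hb (⟨γ₀, h₀⟩ : s))
/-- Constrained reformulation for TPAUC: restricting the dual variable `γ` to the
coupled interval `[max(−a, b−1), 1]` does not change the min-max value of the objective
`H(a,b,γ) = ∫(x−a)² dμP + ∫(y−b)² dμN + 2ΔE + 2γΔE − γ²`, and this common value is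
`Var_P + Var_N + (ΔE)² + 2ΔE`. -/
theorem stmt_14 (μP μN : Measure ℝ) [IsProbabilityMeasure μP] [IsProbabilityMeasure μN]
    (hP : μP (Set.Icc 0 1) = 1) (hN : μN (Set.Icc 0 1) = 1)
    (H : ℝ → ℝ → ℝ → ℝ)
    (hH : ∀ a b γ, H a b γ =
      (∫ x, (x - a) ^ 2 ∂μP) + (∫ y, (y - b) ^ 2 ∂μN)
        + 2 * ((∫ y, y ∂μN) - (∫ x, x ∂μP))
        + 2 * γ * ((∫ y, y ∂μN) - (∫ x, x ∂μP)) - γ ^ 2) :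
    ((⨅ a : Set.Icc (0 : ℝ) 1, ⨅ b : Set.Icc (0 : ℝ) 1,
        ⨆ γ : Set.Icc (max (-(a : ℝ)) ((b : ℝ) - 1)) 1, H a b γ) =
      ⨅ a : Set.Icc (0 : ℝ) 1, ⨅ b : Set.Icc (0 : ℝ) 1,
        ⨆ γ : Set.Icc (-1 : ℝ) 1, H a b γ) ∧
    ((⨅ a : Set.Icc (0 : ℝ) 1, ⨅ b : Set.Icc (0 : ℝ) 1,
        ⨆ γ : Set.Icc (-1 : ℝ) 1, H a b γ) =
      ((∫ x, x ^ 2 ∂μP) - (∫ x, x ∂μP) ^ 2) + ((∫ y, y ^ 2 ∂μN) - (∫ y, y ∂μN) ^ 2)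
        + ((∫ y, y ∂μN) - (∫ x, x ∂μP)) ^ 2
        + 2 * ((∫ y, y ∂μN) - (∫ x, x ∂μP))) := by
  have hpm : (∫ x, x ∂μP) ∈ Set.Icc (0:ℝ) 1 := mean_mem μP hP
  have hnm : (∫ y, y ∂μN) ∈ Set.Icc (0:ℝ) 1 := mean_mem μN hN
  set p := ∫ x, x ∂μP with hp
  set n := ∫ y, y ∂μN with hn
  set P2 := ∫ x, x ^ 2 ∂μP with hP2def
  set N2 := ∫ y, y ^ 2 ∂μN with hN2def
  set Q : ℝ → ℝ → ℝ :=
    fun a b => (P2 - 2 * a * p + a ^ 2) + (N2 - 2 * b * n + b ^ 2) + 2 * (n - p) with hQ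
  set V : ℝ := (P2 - p ^ 2) + (N2 - n ^ 2) + (n - p) ^ 2 + 2 * (n - p) with hV
  have hp0 : (0:ℝ) ≤ p := hpm.1
  have hp1 : p ≤ 1 := hpm.2
  have hn0 : (0:ℝ) ≤ n := hnm.1
  have hn1 : n ≤ 1 := hnm.2
  have hHe : ∀ a b γ : ℝ, H a b γ = Q a b + 2 * γ * (n - p) - γ ^ 2 := by
    intro a b γ
    simp only [hQ]
    rw [hH, expand_sq μP hP, expand_sq μN hN, ← hp, ← hn, ← hP2def, ← hN2def]
  have hΔmem : (n - p) ∈ Set.Icc (-1:ℝ) 1 := ⟨by linarith, by linarith⟩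
  -- value of the sup over the full interval
  have hfull : ∀ a b : ℝ,
      (⨆ γ : Set.Icc (-1:ℝ) 1, H a b γ) = Q a b + (n - p) ^ 2 := by
    intro a b
    rw [iSup_congr fun γ : Set.Icc (-1:ℝ) 1 => hHe a b γ]
    exact sup_quad (Q a b) (n - p) _ hΔmem
  -- the key lower bound on the coupled sup
  have key : ∀ a b : Set.Icc (0:ℝ) 1,
      V ≤ ⨆ γ : Set.Icc (max (-(a:ℝ)) ((b:ℝ) - 1)) 1, H a b γ := by
    rintro ⟨a, ha0, ha1⟩ ⟨b, hb0, hb1⟩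
    dsimp only
    rw [iSup_congr fun γ : Set.Icc (max (-a) (b - 1)) 1 => hHe a b γ]
    rcases le_total (max (-a) (b - 1)) (n - p) with h | h
    · refine sup_quad_ge _ _ _ _ (n - p) ⟨h, by linarith⟩ ?_
      simp only [hQ, hV]
      nlinarith [sq_nonneg (a - p), sq_nonneg (b - n)]
    · refine sup_quad_ge _ _ _ _ (max (-a) (b - 1)) 
        ⟨le_refl _, max_le (by linarith) (by linarith)⟩ ?_
      rcases le_total (-a) (b - 1) with h2 | h2
      · rw [max_eq_right h2] at h ⊢
        simp only [hQ, hV]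
        nlinarith [sq_nonneg (a - p), mul_nonneg (by linarith : (0:ℝ) ≤ 1 - p)
          (by linarith : (0:ℝ) ≤ (b - n) + (b - 1 - n + p))]
      · rw [max_eq_left h2] at h ⊢
        simp only [hQ, hV]
        nlinarith [sq_nonneg (b - n), mul_nonneg hn0
          (by linarith : (0:ℝ) ≤ (p - a) - n + (p - a))]
  -- lower bound for the full sup
  have keyfull : ∀ a b : Set.Icc (0:ℝ) 1, V ≤ Q a b + (n - p) ^ 2 := by
    rintro ⟨a, ha⟩ ⟨b, hb⟩
    simp only [hQ, hV]
    nlinarith [sq_nonneg (a - p), sq_nonneg (b - n)]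
  have hpmem : p ∈ Set.Icc (0:ℝ) 1 := ⟨hp0, hp1⟩
  have hnmem : n ∈ Set.Icc (0:ℝ) 1 := ⟨hn0, hn1⟩
  -- right-hand side equality
  have hR : (⨅ a : Set.Icc (0 : ℝ) 1, ⨅ b : Set.Icc (0 : ℝ) 1,
      ⨆ γ : Set.Icc (-1 : ℝ) 1, H a b γ) = V := by
    have e1 : (⨅ a : Set.Icc (0 : ℝ) 1, ⨅ b : Set.Icc (0 : ℝ) 1,
        ⨆ γ : Set.Icc (-1 : ℝ) 1, H a b γ) =
        ⨅ a : Set.Icc (0 : ℝ) 1, ⨅ b : Set.Icc (0 : ℝ) 1, (Q a b + (n - p) ^ 2) :=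
      iInf_congr fun a => iInf_congr fun b => hfull a b
    rw [e1]
    apply le_antisymm
    · have hbd1 : BddBelow (Set.range fun a : Set.Icc (0:ℝ) 1 =>
          ⨅ b : Set.Icc (0:ℝ) 1, (Q a b + (n - p) ^ 2)) := by
        refine ⟨V, ?_⟩
        rintro x ⟨a, rfl⟩
        exact le_ciInf fun b => keyfull a b
      have hbd2 : BddBelow (Set.range fun b : Set.Icc (0:ℝ) 1 =>
          (Q p b + (n - p) ^ 2)) := by
        refine ⟨V, ?_⟩
        rintro x ⟨b, rfl⟩
        exact keyfull ⟨p, hpmem⟩ b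
      calc (⨅ a : Set.Icc (0 : ℝ) 1, ⨅ b : Set.Icc (0 : ℝ) 1, (Q a b + (n - p) ^ 2))
          ≤ ⨅ b : Set.Icc (0:ℝ) 1, (Q p b + (n - p) ^ 2) := ciInf_le hbd1 ⟨p, hpmem⟩
        _ ≤ Q p n + (n - p) ^ 2 := ciInf_le hbd2 ⟨n, hnmem⟩
        _ = V := by simp only [hQ, hV]; ring
    · exact le_ciInf fun a => le_ciInf fun b => keyfull a b
  -- left-hand side equality
  have hL : (⨅ a : Set.Icc (0 : ℝ) 1, ⨅ b : Set.Icc (0 : ℝ) 1,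
      ⨆ γ : Set.Icc (max (-(a : ℝ)) ((b : ℝ) - 1)) 1, H a b γ) = V := by
    apply le_antisymm
    · have hbd1 : BddBelow (Set.range fun a : Set.Icc (0:ℝ) 1 =>
          ⨅ b : Set.Icc (0:ℝ) 1,
            ⨆ γ : Set.Icc (max (-(a : ℝ)) ((b : ℝ) - 1)) 1, H a b γ) := by
        refine ⟨V, ?_⟩
        rintro x ⟨a, rfl⟩
        exact le_ciInf fun b => key a b
      have hbd2 : BddBelow (Set.range fun b : Set.Icc (0:ℝ) 1 =>
          ⨆ γ : Set.Icc (max (-(p : ℝ)) ((b : ℝ) - 1)) 1, H p b γ) := by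
        refine ⟨V, ?_⟩
        rintro x ⟨b, rfl⟩
        exact key ⟨p, hpmem⟩ b
      have hmemc : (n - p) ∈ Set.Icc (max (-(p : ℝ)) (n - 1)) 1 :=
        ⟨max_le (by linarith) (by linarith), by linarith⟩
      calc (⨅ a : Set.Icc (0 : ℝ) 1, ⨅ b : Set.Icc (0 : ℝ) 1,
            ⨆ γ : Set.Icc (max (-(a : ℝ)) ((b : ℝ) - 1)) 1, H a b γ)
          ≤ ⨅ b : Set.Icc (0:ℝ) 1,
            ⨆ γ : Set.Icc (max (-(p : ℝ)) ((b : ℝ) - 1)) 1, H p b γ :=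
            ciInf_le hbd1 ⟨p, hpmem⟩
        _ ≤ ⨆ γ : Set.Icc (max (-(p : ℝ)) (n - 1)) 1, H p n γ := ciInf_le hbd2 ⟨n, hnmem⟩
        _ = Q p n + (n - p) ^ 2 := by
            rw [iSup_congr fun γ : Set.Icc (max (-(p:ℝ)) (n - 1)) 1 => hHe p n γ]
            exact sup_quad (Q p n) (n - p) _ hmemc
        _ = V := by simp only [hQ, hV]; ring
    · exact le_ciInf fun a => le_ciInf fun b => key a b
  exact ⟨hL.trans hR.symm, hR⟩
end
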